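/- Fix grid centers u_1, …, u_M ∈ ℝ², bandwidth σ > 0, and a weight function w : ℝ → ℝ≥0 that is L_w-Lipschitz and bounded by W. For a finite multiset D of points (b, p) ∈ ℝ² define the persistence image I(D)[m] = Σ_{(b,p)∈D} w(p)·exp(−‖u_m − (b,p)‖²/(2σ²)). Then for two multisets D, D' of the same cardinality n with a bijection matching points at distance at most δ (in Euclidean norm on ℝ², where moving a point changes both its location and its persistence coordinate by at most δ), one has |I(D)[m] − I(D')[m]| ≤ n·(L_w·δ + W·δ/(σ·√e)) for every m, using that the Gaussian kernel x ↦ exp(−‖x‖²/(2σ²)) is (1/(σ√e))-Lipschitz. -/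

import Mathlib

/-!
Each summand changes by `|w(p) - w(p')| · K + w(p') · |K - K'|` at most, where `K ≤ 1`. The first
term is at most `L_w δ`, since the persistence coordinate moves by at most the Euclidean distance.
The second is at most `W δ / (σ √e)`: the Gaussian profile `t ↦ exp (-t² / (2σ²))` has derivative
`-(t / σ²) exp (-t² / (2σ²))`, whose absolute value is maximal at `|t| = σ`, and the norm is
1-Lipschitz. Summing over the `n` matched pairs gives the bound.
-/

open Real

lemma mul_exp_neg_sq_div_two_le (s : ℝ) : s * exp (-s ^ 2 / 2) ≤ exp (-1 / 2) := by
  have hs : s ≤ exp ((s ^ 2 - 1) / 2) := by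
    nlinarith [add_one_le_exp ((s ^ 2 - 1) / 2), sq_nonneg (s - 1)]
  calc s * exp (-s ^ 2 / 2) ≤ exp ((s ^ 2 - 1) / 2) * exp (-s ^ 2 / 2) := by gcongr
    _ = exp (-1 / 2) := by rw [← exp_add]; ring_nf

lemma hasDerivAt_exp_neg_sq_div (σ t : ℝ) :
    HasDerivAt (fun t : ℝ => exp (-t ^ 2 / (2 * σ ^ 2)))
      (-t / σ ^ 2 * exp (-t ^ 2 / (2 * σ ^ 2))) t := by
  refine ((((hasDerivAt_pow 2 t).fun_neg).div_const (2 * σ ^ 2)).exp).congr_deriv ?_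
  by_cases hσ : σ = 0
  · simp [hσ]
  · field_simp
    ring

section GaussianProfile

variable {σ : ℝ}

lemma abs_deriv_exp_neg_sq_div_le (hσ : 0 < σ) (t : ℝ) :
    |-t / σ ^ 2 * exp (-t ^ 2 / (2 * σ ^ 2))| ≤ (σ * √(exp 1))⁻¹ := by
  have hrescale : |-t / σ ^ 2 * exp (-t ^ 2 / (2 * σ ^ 2))|
      = |t| / σ * exp (-(|t| / σ) ^ 2 / 2) / σ := by
    rw [abs_mul, abs_div, abs_neg, abs_of_pos (exp_pos _), abs_of_pos (by positivity : 0 < σ ^ 2),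
      div_pow, sq_abs]
    field_simp
  rw [hrescale, ← exp_half, mul_inv, ← exp_neg, inv_mul_eq_div, ← neg_div]
  gcongr
  exact mul_exp_neg_sq_div_two_le _

lemma abs_exp_neg_sq_div_sub_le (hσ : 0 < σ) (a b : ℝ) :
    |exp (-a ^ 2 / (2 * σ ^ 2)) - exp (-b ^ 2 / (2 * σ ^ 2))| ≤ (σ * √(exp 1))⁻¹ * |a - b| := by
  simpa only [Real.norm_eq_abs] using Convex.norm_image_sub_le_of_norm_hasDerivWithin_le
    (fun t _ => (hasDerivAt_exp_neg_sq_div σ t).hasDerivWithinAt)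
    (fun t _ => abs_deriv_exp_neg_sq_div_le hσ t) convex_univ (Set.mem_univ b) (Set.mem_univ a)

lemma abs_exp_neg_norm_sq_div_sub_le {E : Type*} [SeminormedAddCommGroup E] (hσ : 0 < σ)
    (x y : E) :
    |exp (-‖x‖ ^ 2 / (2 * σ ^ 2)) - exp (-‖y‖ ^ 2 / (2 * σ ^ 2))| ≤
      (σ * √(exp 1))⁻¹ * ‖x - y‖ :=
  (abs_exp_neg_sq_div_sub_le hσ _ _).trans (by gcongr; exact abs_norm_sub_norm_le x y)

lemma abs_exp_neg_sq_div_le_one (a : ℝ) : |exp (-a ^ 2 / (2 * σ ^ 2))| ≤ 1 := by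
  rw [abs_of_pos (exp_pos _), exp_le_one_iff, neg_div, neg_nonpos]
  positivity

end GaussianProfile

lemma abs_mul_sub_mul_le {a a' g g' W : ℝ} (hg : |g| ≤ 1) (ha' : |a'| ≤ W) :
    |a * g - a' * g'| ≤ |a - a'| + W * |g - g'| :=
  calc |a * g - a' * g'| = |(a - a') * g + a' * (g - g')| := by ring_nf
    _ ≤ |a - a'| * |g| + |a'| * |g - g'| := by rw [← abs_mul, ← abs_mul]; exact abs_add_le _ _
    _ ≤ |a - a'| + W * |g - g'| := by
        gcongr
        exact mul_le_of_le_one_right (abs_nonneg _) hg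

theorem stmt_8_general (M : ℕ) (u : Fin M → EuclideanSpace ℝ (Fin 2))
    (σ : ℝ) (hσ : 0 < σ)
    (w : ℝ → ℝ) (Lw W : ℝ) (hLw : 0 ≤ Lw) (hW : 0 ≤ W)
    (hwLip : ∀ a b : ℝ, |w a - w b| ≤ Lw * |a - b|)
    (hw0 : ∀ a, 0 ≤ w a) (hwW : ∀ a, w a ≤ W)
    (n : ℕ) (x x' : Fin n → EuclideanSpace ℝ (Fin 2))
    (δ : ℝ) (hmatch : ∀ i, ‖x i - x' i‖ ≤ δ) :
    ∀ m : Fin M,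
      |(∑ i, w (x i 1) * Real.exp (-‖u m - x i‖ ^ 2 / (2 * σ ^ 2))) -
        (∑ i, w (x' i 1) * Real.exp (-‖u m - x' i‖ ^ 2 / (2 * σ ^ 2)))| ≤
        n * (Lw * δ + W * δ / (σ * Real.sqrt (Real.exp 1))) := by
  intro m
  rw [← Finset.sum_sub_distrib]
  refine (Finset.abs_sum_le_sum_abs _ _).trans ?_
  calc _ ≤ ∑ _i : Fin n, (Lw * δ + W * δ / (σ * √(exp 1))) := Finset.sum_le_sum fun i _ => ?_
    _ = _ := by simp [mul_add]
  have hcoord : |x i 1 - x' i 1| ≤ δ := (PiLp.norm_apply_le (x i - x' i) 1).trans (hmatch i)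
  have hkernel := abs_exp_neg_norm_sq_div_sub_le hσ (u m - x i) (u m - x' i)
  rw [sub_sub_sub_cancel_left, norm_sub_rev (x' i)] at hkernel
  calc _ ≤ |w (x i 1) - w (x' i 1)| + W * |exp (-‖u m - x i‖ ^ 2 / (2 * σ ^ 2)) -
          exp (-‖u m - x' i‖ ^ 2 / (2 * σ ^ 2))| :=
        abs_mul_sub_mul_le (abs_exp_neg_sq_div_le_one _) ((abs_of_nonneg (hw0 _)).trans_le (hwW _))
    _ ≤ Lw * |x i 1 - x' i 1| + W * ((σ * √(exp 1))⁻¹ * ‖x i - x' i‖) := by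
        gcongr
        exact hwLip _ _
    _ ≤ Lw * δ + W * ((σ * √(exp 1))⁻¹ * δ) := by gcongr; exact hmatch i
    _ = Lw * δ + W * δ / (σ * √(exp 1)) := by ring

theorem stmt_8 (M : ℕ) (u : Fin M → EuclideanSpace ℝ (Fin 2))
    (σ : ℝ) (hσ : 0 < σ)
    (w : ℝ → ℝ) (Lw W : ℝ) (hLw : 0 ≤ Lw) (hW : 0 ≤ W)
    (hwLip : ∀ a b : ℝ, |w a - w b| ≤ Lw * |a - b|)
    (hw0 : ∀ a, 0 ≤ w a) (hwW : ∀ a, w a ≤ W)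
    (n : ℕ) (x x' : Fin n → EuclideanSpace ℝ (Fin 2))
    (δ : ℝ) (hδ0 : 0 ≤ δ) (hmatch : ∀ i, ‖x i - x' i‖ ≤ δ) :
    ∀ m : Fin M,
      |(∑ i, w (x i 1) * Real.exp (-‖u m - x i‖ ^ 2 / (2 * σ ^ 2))) -
        (∑ i, w (x' i 1) * Real.exp (-‖u m - x' i‖ ^ 2 / (2 * σ ^ 2)))| ≤
        n * (Lw * δ + W * δ / (σ * Real.sqrt (Real.exp 1))) :=
  stmt_8_general M u σ hσ w Lw W hLw hW hwLip hw0 hwW n x x' δ hmatch
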